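/- Let (X,r) be a Φ_L-algebra over the category of T0 L-valued topological spaces, and let e be the specialization L-order of X. Then (X,e) is a complete L-ordered set, and for every L-subset A : X → L, the infimum of A is ⊓A = r([A]). -/

import Mathlib

/-!
Continuity of `r` makes it monotone from the `L`-order `sub(u, v)` on open filters to the
specialization `L`-order. Since `A z ≤ sub([A], [z])`, `sub([y], [A]) = ⨅ z, A z ⇨ e(y, z)`
and `r [x] = x`, the point `r [A]` is a lower bound of `A` lying above every lower bound,
i.e. `⊓A`. Completeness follows because `⊔A` is the infimum of the upper bounds of `A`.
-/

variable {L : Type*} {X : Type*} {Y : Type*}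

/-- `sub(A,B) = ⨅ x, A x ⇨ B x` for `L`-subsets `A B : X → L`. -/
def subL [Order.Frame L] (A B : X → L) : L := ⨅ x, A x ⇨ B x

/-- An `L`-valued topology on `X`: a family of `L`-subsets closed under binary
pointwise infima, arbitrary pointwise suprema, containing all constants. -/
structure IsLTopology [Order.Frame L] (𝒪 : Set (X → L)) : Prop where
  inf_mem : ∀ A B : X → L, A ∈ 𝒪 → B ∈ 𝒪 → A ⊓ B ∈ 𝒪
  sSup_mem : ∀ S : Set (X → L), S ⊆ 𝒪 → sSup S ∈ 𝒪
  const_mem : ∀ a : L, (fun _ => a : X → L) ∈ 𝒪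

/-- An open filter of `(X, 𝒪)`: a map `u : 𝒪 → L` with `u (A ⊓ B) = u A ⊓ u B`
and `u (a_X) ≥ a`. -/
structure LFilter [Order.Frame L] (𝒪 : Set (X → L)) where
  toFun : ↥𝒪 → L
  map_inf : ∀ (A B : ↥𝒪) (h : (A : X → L) ⊓ (B : X → L) ∈ 𝒪),
    toFun ⟨(A : X → L) ⊓ (B : X → L), h⟩ = toFun A ⊓ toFun B
  const_le : ∀ (a : L) (h : (fun _ => a : X → L) ∈ 𝒪), a ≤ toFun ⟨fun _ => a, h⟩

/-- `φ(A)(u) = u(A)`. -/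
def phiF [Order.Frame L] (𝒪 : Set (X → L)) (A : ↥𝒪) : LFilter 𝒪 → L := fun u => u.toFun A

/-- The `L`-valued topology on `Φ_L(X)` generated by the base `{φ(A) | A ∈ 𝒪}`:
its members are exactly the suprema `⨆_j φ(A_j) ⊓ (a_j)_const`. -/
def filtOpens [Order.Frame L] (𝒪 : Set (X → L)) : Set (LFilter 𝒪 → L) :=
  { W | ∃ S : Set (↥𝒪 × L), W = fun u => ⨆ p ∈ S, u.toFun p.1 ⊓ p.2 }

/-- The pointed filter `[x](A) = A(x)`. -/
def ptFilter [Order.Frame L] (𝒪 : Set (X → L)) (x : X) : LFilter 𝒪 where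
  toFun A := (A : X → L) x
  map_inf _ _ _ := rfl
  const_le _ _ := le_rfl

/-- The filter `[S](A) = sub(S, A)` for an `L`-subset `S`. -/
def prFilter [Order.Frame L] (𝒪 : Set (X → L)) (S : X → L) : LFilter 𝒪 where
  toFun A := subL S (A : X → L)
  map_inf A B h := by
    simp only [subL, Pi.inf_apply, himp_inf_distrib]
    exact iInf_inf_eq
  const_le a h := le_iInf fun x => le_himp_iff.2 inf_le_left

/-- `Φ_L f` for a continuous map `f`. -/
def filtMap [Order.Frame L] (𝒪X : Set (X → L)) (𝒪Y : Set (Y → L)) (f : X → Y)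
    (hf : ∀ B : ↥𝒪Y, (B : Y → L) ∘ f ∈ 𝒪X) (u : LFilter 𝒪X) : LFilter 𝒪Y where
  toFun B := u.toFun ⟨(B : Y → L) ∘ f, hf B⟩
  map_inf A B h := u.map_inf ⟨(A : Y → L) ∘ f, hf A⟩ ⟨(B : Y → L) ∘ f, hf B⟩
    (hf ⟨(A : Y → L) ⊓ (B : Y → L), h⟩)
  const_le a h := u.const_le a (hf ⟨fun _ => a, h⟩)

lemma phi_mem [Order.Frame L] (𝒪 : Set (X → L)) (A : ↥𝒪) : phiF 𝒪 A ∈ filtOpens 𝒪 := by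
  refine ⟨{(A, ⊤)}, ?_⟩
  funext u
  simp [phiF]

lemma LFilter.mono [Order.Frame L] {𝒪 : Set (X → L)} (u : LFilter 𝒪) (A B : ↥𝒪)
    (hAB : (A : X → L) ≤ (B : X → L)) : u.toFun A ≤ u.toFun B := by
  have h : (A : X → L) ⊓ (B : X → L) ∈ 𝒪 := by
    rw [inf_eq_left.2 hAB]; exact A.2
  have h2 := u.map_inf A B h
  have h3 : (⟨(A : X → L) ⊓ (B : X → L), h⟩ : ↥𝒪) = A := Subtype.ext (inf_eq_left.2 hAB)
  rw [h3] at h2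
  rw [h2]
  exact inf_le_right

lemma phi_inf [Order.Frame L] (𝒪 : Set (X → L)) (A B : ↥𝒪)
    (h : (A : X → L) ⊓ (B : X → L) ∈ 𝒪) :
    phiF 𝒪 ⟨(A : X → L) ⊓ (B : X → L), h⟩ = phiF 𝒪 A ⊓ phiF 𝒪 B := by
  funext u
  exact u.map_inf A B h

lemma const_mem_filtOpens [Order.Frame L] (𝒪 : Set (X → L)) (a : L)
    (h : (fun _ => a : X → L) ∈ 𝒪) :
    (fun _ => a : LFilter 𝒪 → L) ∈ filtOpens 𝒪 := by
  refine ⟨{(⟨fun _ => a, h⟩, a)}, ?_⟩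
  funext u
  simp only [Set.mem_singleton_iff, iSup_iSup_eq_left]
  exact (inf_eq_right.2 (u.const_le a h)).symm

/-- `μ_X(α)(A) = α(φ(A))`. -/
def muF [Order.Frame L] (𝒪 : Set (X → L)) (α : LFilter (filtOpens 𝒪)) : LFilter 𝒪 where
  toFun A := α.toFun ⟨phiF 𝒪 A, phi_mem 𝒪 A⟩
  map_inf A B h := by
    have h' : phiF 𝒪 A ⊓ phiF 𝒪 B ∈ filtOpens 𝒪 := phi_inf 𝒪 A B h ▸ phi_mem 𝒪 ⟨_, h⟩
    have h2 := α.map_inf ⟨phiF 𝒪 A, phi_mem 𝒪 A⟩ ⟨phiF 𝒪 B, phi_mem 𝒪 B⟩ h'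
    have h3 : (⟨phiF 𝒪 ⟨(A : X → L) ⊓ (B : X → L), h⟩, phi_mem 𝒪 ⟨_, h⟩⟩ :
        ↥(filtOpens 𝒪)) = ⟨phiF 𝒪 A ⊓ phiF 𝒪 B, h'⟩ := Subtype.ext (phi_inf 𝒪 A B h)
    show α.toFun ⟨phiF 𝒪 ⟨(A : X → L) ⊓ (B : X → L), h⟩, phi_mem 𝒪 ⟨_, h⟩⟩ =
      α.toFun ⟨phiF 𝒪 A, phi_mem 𝒪 A⟩ ⊓ α.toFun ⟨phiF 𝒪 B, phi_mem 𝒪 B⟩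
    rw [h3]
    exact h2
  const_le a h := by
    have h1 : (fun _ => a : LFilter 𝒪 → L) ∈ filtOpens 𝒪 := const_mem_filtOpens 𝒪 a h
    have h2 : (fun _ => a : LFilter 𝒪 → L) ≤ phiF 𝒪 ⟨fun _ => a, h⟩ :=
      fun u => u.const_le a h
    exact le_trans (α.const_le a h1) (α.mono ⟨_, h1⟩ ⟨_, phi_mem 𝒪 ⟨_, h⟩⟩ h2)

lemma filtMap_continuous [Order.Frame L] (𝒪X : Set (X → L)) (𝒪Y : Set (Y → L)) (f : X → Y)
    (hf : ∀ B : ↥𝒪Y, (B : Y → L) ∘ f ∈ 𝒪X) :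
    ∀ W ∈ filtOpens 𝒪Y, (W ∘ filtMap 𝒪X 𝒪Y f hf) ∈ filtOpens 𝒪X := by
  rintro W ⟨S, rfl⟩
  refine ⟨(fun p : ↥𝒪Y × L => ((⟨(p.1 : Y → L) ∘ f, hf p.1⟩ : ↥𝒪X), p.2)) '' S, ?_⟩
  funext u
  rw [iSup_image]
  rfl

lemma muF_continuous [Order.Frame L] (𝒪 : Set (X → L)) :
    ∀ W ∈ filtOpens 𝒪, (W ∘ muF 𝒪) ∈ filtOpens (filtOpens 𝒪) := by
  rintro W ⟨S, rfl⟩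
  refine ⟨(fun p : ↥𝒪 × L =>
    ((⟨phiF 𝒪 p.1, phi_mem 𝒪 p.1⟩ : ↥(filtOpens 𝒪)), p.2)) '' S, ?_⟩
  funext α
  rw [iSup_image]
  rfl

lemma ptFilter_continuous [Order.Frame L] (𝒪 : Set (X → L)) (h𝒪 : IsLTopology 𝒪) :
    ∀ W ∈ filtOpens 𝒪, (W ∘ ptFilter 𝒪) ∈ 𝒪 := by
  rintro W ⟨S, rfl⟩
  have key : ((fun u : LFilter 𝒪 => ⨆ p ∈ S, u.toFun p.1 ⊓ p.2) ∘ ptFilter 𝒪) =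
      sSup ((fun p : ↥𝒪 × L => (p.1 : X → L) ⊓ fun _ => p.2) '' S) := by
    funext x
    rw [sSup_image', iSup_apply]
    exact (iSup_subtype'' S fun p : ↥𝒪 × L =>
      ((p.1 : X → L) ⊓ fun _ => p.2 : X → L) x).symm
  rw [key]
  apply h𝒪.sSup_mem
  rintro g ⟨p, _, rfl⟩
  exact h𝒪.inf_mem _ _ p.1.2 (h𝒪.const_mem p.2)

/-- An `L`-order as a binary `L`-relation with the order axioms. -/
structure IsLOrder [Order.Frame L] (e : X → X → L) : Prop where
  refl : ∀ x, e x x = ⊤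
  trans : ∀ x y z, e x y ⊓ e y z ≤ e x z
  antisymm : ∀ x y, e x y = ⊤ → e y x = ⊤ → x = y

/-- `s` is a supremum of the `L`-subset `A`. -/
def IsSupE [Order.Frame L] (e : X → X → L) (A : X → L) (s : X) : Prop :=
  ∀ y, e s y = ⨅ z, A z ⇨ e z y

/-- `i` is an infimum of the `L`-subset `A`. -/
def IsInfE [Order.Frame L] (e : X → X → L) (A : X → L) (i : X) : Prop :=
  ∀ y, e y i = ⨅ z, A z ⇨ e y z

/-- Completeness: every `L`-subset has a supremum. -/
def CompleteE [Order.Frame L] (e : X → X → L) : Prop := ∀ A : X → L, ∃ s, IsSupE e A s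

/-- Directedness of an `L`-subset. -/
def DirectedE [Order.Frame L] (e : X → X → L) (D : X → L) : Prop :=
  (⨆ x, D x) = ⊤ ∧ ∀ x y, D x ⊓ D y ≤ ⨆ z, D z ⊓ e x z ⊓ e y z

/-- An ideal: a directed lower set. -/
def IsIdealE [Order.Frame L] (e : X → X → L) (I : X → L) : Prop :=
  DirectedE e I ∧ ∀ x y, I x ⊓ e y x ≤ I y

/-- `↑x(y) = e(x,y)`. -/
def upE [Order.Frame L] (e : X → X → L) (x : X) : X → L := fun y => e x y

/-- `⇓x(y) = ⨅_{I ideal} (e(x, ⊔I) ⇨ I(y))`. -/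
def wbelowE [Order.Frame L] (e : X → X → L) (x y : X) : L :=
  ⨅ I : X → L, ⨅ _ : IsIdealE e I, ⨅ s : X, ⨅ _ : IsSupE e I s, e x s ⇨ I y

/-- Scott open `L`-subsets. -/
def ScottOpenE [Order.Frame L] (e : X → X → L) (A : X → L) : Prop :=
  (∀ x y, A x ⊓ e x y ≤ A y) ∧
  ∀ D : X → L, DirectedE e D → ∀ s, IsSupE e D s → A s ≤ ⨆ x, A x ⊓ D x

/-- The `L`-Scott topology. -/
def scottOpens [Order.Frame L] (e : X → X → L) : Set (X → L) := { A | ScottOpenE e A }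

/-- `u^l(x) = ⨆_{A ∈ σ_L(X)} u(A) ⊓ sub(A, ↑x)`. -/
def lowerOf [Order.Frame L] (e : X → X → L) (u : LFilter (scottOpens e)) : X → L :=
  fun x => ⨆ A : ↥(scottOpens e), u.toFun A ⊓ subL (A : X → L) (upE e x)

/-- The specialization `L`-order `e(x,y) = ⨅_{A ∈ 𝒪} (A x ⇨ A y)`. -/
def specE [Order.Frame L] (𝒪 : Set (X → L)) (x y : X) : L :=
  ⨅ A : ↥𝒪, (A : X → L) x ⇨ (A : X → L) y

/-- `sub(u,v) = ⨅_{A ∈ 𝒪} (u A ⇨ v A)` for open filters. -/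
def subF [Order.Frame L] {𝒪 : Set (X → L)} (u v : LFilter 𝒪) : L :=
  ⨅ A : ↥𝒪, u.toFun A ⇨ v.toFun A


section SpecializationOrder

variable [Order.Frame L] (𝒪 : Set (X → L))

lemma specE_self (x : X) : specE 𝒪 x x = ⊤ := by
  simp [specE]

lemma specE_trans (x y z : X) : specE 𝒪 x y ⊓ specE 𝒪 y z ≤ specE 𝒪 x z :=
  le_iInf fun B => le_himp_iff.2 <| calc
    specE 𝒪 x y ⊓ specE 𝒪 y z ⊓ (B : X → L) x
        ≤ ((B : X → L) y ⇨ (B : X → L) z) ⊓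
            (((B : X → L) x ⇨ (B : X → L) y) ⊓ (B : X → L) x) := by
          rw [inf_comm (specE 𝒪 x y), inf_assoc]
          exact inf_le_inf (iInf_le _ B) (inf_le_inf_right _ (iInf_le _ B))
    _ ≤ ((B : X → L) y ⇨ (B : X → L) z) ⊓ (B : X → L) y := inf_le_inf_left _ himp_inf_le
    _ ≤ (B : X → L) z := himp_inf_le

lemma le_of_specE_eq_top {x y : X} (h : specE 𝒪 x y = ⊤) (A : ↥𝒪) :
    (A : X → L) x ≤ (A : X → L) y :=
  himp_eq_top_iff.1 <| top_le_iff.1 <| h ▸ iInf_le _ A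

lemma isLOrder_specE (hT0 : ∀ x y : X, (∀ A ∈ 𝒪, A x = A y) → x = y) :
    IsLOrder (specE 𝒪) where
  refl := specE_self 𝒪
  trans := specE_trans 𝒪
  antisymm x y hxy hyx := hT0 x y fun A hA =>
    le_antisymm (le_of_specE_eq_top 𝒪 hxy ⟨A, hA⟩) (le_of_specE_eq_top 𝒪 hyx ⟨A, hA⟩)

end SpecializationOrder

section FilterOrder

variable [Order.Frame L] {𝒪 : Set (X → L)}

lemma subF_inf_le_of_mem_filtOpens {W : LFilter 𝒪 → L} (hW : W ∈ filtOpens 𝒪)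
    (u v : LFilter 𝒪) : subF u v ⊓ W u ≤ W v := by
  obtain ⟨S, rfl⟩ := hW
  simp only [inf_iSup_eq]
  refine iSup₂_le fun p hp => le_iSup₂_of_le p hp ?_
  rw [← inf_assoc]
  exact inf_le_inf_right _ (le_trans (inf_le_inf_right _ (iInf_le _ p.1)) himp_inf_le)

lemma subF_le_specE_of_continuous (r : LFilter 𝒪 → X)
    (hrc : ∀ A : ↥𝒪, ((A : X → L) ∘ r) ∈ filtOpens 𝒪) (u v : LFilter 𝒪) :
    subF u v ≤ specE 𝒪 (r u) (r v) :=
  le_iInf fun A => le_himp_iff.2 <| subF_inf_le_of_mem_filtOpens (hrc A) u v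

lemma le_subF_prFilter_ptFilter (A : X → L) (z : X) :
    A z ≤ subF (prFilter 𝒪 A) (ptFilter 𝒪 z) :=
  le_iInf fun _ => le_himp_iff.2 <| le_trans (inf_le_inf_left _ (iInf_le _ z)) inf_himp_le

lemma subF_ptFilter_prFilter (A : X → L) (y : X) :
    subF (ptFilter 𝒪 y) (prFilter 𝒪 A) = ⨅ z, A z ⇨ specE 𝒪 y z := by
  simp only [subF, ptFilter, prFilter, subL, specE, himp_iInf_eq]
  rw [iInf_comm]
  simp only [himp_left_comm]

end FilterOrder

section LOrder

variable [Order.Frame L] {e : X → X → L}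

lemma isInfE_of_le_of_iInf_le (htrans : ∀ x y z, e x y ⊓ e y z ≤ e x z) {A : X → L} {i : X}
    (hlower : ∀ z, A z ≤ e i z) (hgreatest : ∀ y, (⨅ z, A z ⇨ e y z) ≤ e y i) :
    IsInfE e A i := fun y =>
  le_antisymm
    (le_iInf fun z => le_himp_iff.2 <|
      le_trans (inf_le_inf_left _ (hlower z)) (htrans y i z))
    (hgreatest y)

lemma isSupE_of_isInfE_upperBounds (hrefl : ∀ x, e x x = ⊤)
    (htrans : ∀ x y z, e x y ⊓ e y z ≤ e x z) {A : X → L} {s : X}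
    (hs : IsInfE e (fun y => ⨅ z, A z ⇨ e z y) s) : IsSupE e A s := by
  have hupper : ∀ z, A z ≤ e z s := fun z => by
    rw [hs z]
    exact le_iInf fun y => le_himp_iff.2 <|
      le_trans (inf_le_inf_left _ (iInf_le _ z)) inf_himp_le
  have hleast : ∀ y, (⨅ z, A z ⇨ e z y) ≤ e s y := fun y => by
    have h : (⊤ : L) ≤ ⨅ y, (⨅ z, A z ⇨ e z y) ⇨ e s y := by rw [← hs s, hrefl]
    exact himp_eq_top_iff.1 (top_le_iff.1 (h.trans (iInf_le _ y)))
  refine fun y => le_antisymm ?_ (hleast y)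
  refine le_iInf fun z => le_himp_iff.2 ?_
  rw [inf_comm]
  exact le_trans (inf_le_inf_right _ (hupper z)) (htrans z s y)

end LOrder

theorem stmt17_general [Order.Frame L] (𝒪 : Set (X → L))
    (hT0 : ∀ x y : X, (∀ A ∈ 𝒪, A x = A y) → x = y)
    (r : LFilter 𝒪 → X)
    (hrc : ∀ A : ↥𝒪, ((A : X → L) ∘ r) ∈ filtOpens 𝒪)
    (hunit : ∀ x, r (ptFilter 𝒪 x) = x) :
    IsLOrder (specE 𝒪) ∧ CompleteE (specE 𝒪) ∧
    ∀ A : X → L, IsInfE (specE 𝒪) A (r (prFilter 𝒪 A)) := by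
  have hinf : ∀ A : X → L, IsInfE (specE 𝒪) A (r (prFilter 𝒪 A)) := fun A =>
    isInfE_of_le_of_iInf_le (specE_trans 𝒪)
      (fun z => by
        simpa only [hunit] using (le_subF_prFilter_ptFilter A z).trans
          (subF_le_specE_of_continuous r hrc (prFilter 𝒪 A) (ptFilter 𝒪 z)))
      (fun y => by
        simpa only [hunit, subF_ptFilter_prFilter] using
          subF_le_specE_of_continuous r hrc (ptFilter 𝒪 y) (prFilter 𝒪 A))
  exact ⟨isLOrder_specE 𝒪 hT0,
    fun A => ⟨_, isSupE_of_isInfE_upperBounds (specE_self 𝒪) (specE_trans 𝒪) (hinf _)⟩, hinf⟩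

/-- For a `Φ_L`-algebra `(X, r)` over `T0` `L`-valued topological spaces,
the specialization `L`-order `e` makes `X` a complete `L`-ordered set, with
`⊓A = r([A])` for every `L`-subset `A`. -/
theorem stmt17 [Order.Frame L] (𝒪 : Set (X → L)) (h𝒪 : IsLTopology 𝒪)
    (hT0 : ∀ x y : X, (∀ A ∈ 𝒪, A x = A y) → x = y)
    (r : LFilter 𝒪 → X)
    (hrc : ∀ A : ↥𝒪, ((A : X → L) ∘ r) ∈ filtOpens 𝒪)
    (hunit : ∀ x, r (ptFilter 𝒪 x) = x)
    (hmul : ∀ α : LFilter (filtOpens 𝒪),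
      r (filtMap (filtOpens 𝒪) 𝒪 r hrc α) = r (muF 𝒪 α)) :
    IsLOrder (specE 𝒪) ∧ CompleteE (specE 𝒪) ∧
    ∀ A : X → L, IsInfE (specE 𝒪) A (r (prFilter 𝒪 A)) :=
  stmt17_general 𝒪 hT0 r hrc hunit
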